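/- arXiv:1604.08733 — 5 statements merged into one kernel-verified Lean document; each statement's English description precedes it below -/
import Mathlib

section
/- Let D be a strongly connected balanced bipartite digraph with partite sets X and Y, each of size a ≥ 2. If d(x) + d(y) ≥ 2a + 3 for every dominating pair of vertices {x, y}, then the underlying undirected graph UG(D) is 2-connected. -/
/-!
Suppose deleting `v` disconnects `UG(D)`, say `v ∈ X`, and let `p`, `q` lie in different
components `C₁`, `C₂` of `UG(D) - v`. Following directed paths from `p` and from `q` to `v`,
the last vertices `u₁ ∈ C₁`, `u₂ ∈ C₂` before `v` form a dominating pair. Every neighbour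
of `uᵢ` lies in `X ∩ (Cᵢ ∪ {v})`, so `d(uᵢ) ≤ 2 (|Cᵢ ∩ X| + 1)`, and since `C₁ ∩ X` and
`C₂ ∩ X` are disjoint subsets of `X - v` we get `d(u₁) + d(u₂) ≤ 2 (a - 1) + 4 = 2a + 2`.
-/

open Finset

variable {V : Type*}

/-- Total degree (out-degree plus in-degree) of `x` in the digraph with arc relation `A`. -/
noncomputable def deg (A : V → V → Prop) (x : V) : ℕ :=
  Set.ncard {y | A x y} + Set.ncard {y | A y x}

/-- The digraph with arc relation `A` is strongly connected. -/
def StrongConn (A : V → V → Prop) : Prop :=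
  ∀ u v : V, Relation.ReflTransGen A u v

/-- `{x, y}` is a dominating pair: distinct vertices with a common out-neighbour. -/
def DomPair (A : V → V → Prop) (x y : V) : Prop :=
  x ≠ y ∧ ∃ z, A x z ∧ A y z

/-- `X, Y` is a bipartition of the digraph `A`: the two parts partition the vertex
set and every arc joins the two parts. -/
def IsBipartition (A : V → V → Prop) (X Y : Set V) : Prop :=
  Disjoint X Y ∧ X ∪ Y = Set.univ ∧
    ∀ u v, A u v → (u ∈ X ∧ v ∈ Y) ∨ (u ∈ Y ∧ v ∈ X)

/-- The underlying undirected graph of the digraph `A`. -/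
def UG (A : V → V → Prop) : SimpleGraph V where
  Adj u v := u ≠ v ∧ (A u v ∨ A v u)
  symm := ⟨fun u v h => ⟨h.1.symm, h.2.symm⟩⟩
  loopless := ⟨fun v h => h.1 rfl⟩

/-- A graph on a finite vertex set is 2-connected if it has at least 3 vertices and
deleting any single vertex leaves a connected graph. -/
def TwoConnected [Fintype V] (G : SimpleGraph V) : Prop :=
  3 ≤ Fintype.card V ∧ ∀ v : V, (G.induce {u : V | u ≠ v}).Connected

variable {A : V → V → Prop}

namespace IsBipartition

variable {X Y : Set V}

lemma symm (h : IsBipartition A X Y) : IsBipartition A Y X :=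
  ⟨h.1.symm, Set.union_comm X Y ▸ h.2.1, fun u w huw => (h.2.2 u w huw).symm⟩

lemma mem_or_mem (h : IsBipartition A X Y) (v : V) : v ∈ X ∨ v ∈ Y :=
  (h.2.1 ▸ Set.mem_univ v : v ∈ X ∪ Y)

lemma mem_right_of_arc (h : IsBipartition A X Y) {u v : V} (hv : v ∈ X)
    (huv : A u v ∨ A v u) : u ∈ Y := by
  rcases huv with huv | hvu
  · rcases h.2.2 u v huv with ⟨-, hvY⟩ | ⟨huY, -⟩
    · exact absurd hvY (h.1.notMem_of_mem_left hv)
    · exact huY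
  · rcases h.2.2 v u hvu with ⟨-, huY⟩ | ⟨hvY, -⟩
    · exact huY
    · exact absurd hvY (h.1.notMem_of_mem_left hv)

lemma card_eq [Fintype V] (h : IsBipartition A X Y) :
    Fintype.card V = X.ncard + Y.ncard := by
  rw [← Set.ncard_union_eq h.1, h.2.1, Set.ncard_univ, Nat.card_eq_fintype_card]

end IsBipartition

lemma deg_le_of_forall_arc_mem [Finite V] {u : V} {S : Set V}
    (hS : ∀ z, A u z ∨ A z u → z ∈ S) : deg A u ≤ 2 * S.ncard := by
  have hout := Set.ncard_le_ncard (s := {z | A u z}) (fun z hz => hS z (Or.inl hz))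
  have hin := Set.ncard_le_ncard (s := {z | A z u}) (fun z hz => hS z (Or.inr hz))
  unfold deg
  omega

/-- `x` and `u` lie in the same component of `UG A - v`. -/
def AvoidReach (A : V → V → Prop) (v x u : V) : Prop :=
  ∃ (hx : x ≠ v) (hu : u ≠ v),
    ((UG A).induce {w : V | w ≠ v}).Reachable ⟨x, hx⟩ ⟨u, hu⟩

namespace AvoidReach

variable {v x u z : V}

lemma refl (hx : x ≠ v) : AvoidReach A v x x := ⟨hx, hx, .rfl⟩

lemma symm (h : AvoidReach A v x u) : AvoidReach A v u x :=
  ⟨h.2.1, h.1, h.2.2.symm⟩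

lemma trans (h₁ : AvoidReach A v x u) (h₂ : AvoidReach A v u z) : AvoidReach A v x z :=
  ⟨h₁.1, h₂.2.1, h₁.2.2.trans h₂.2.2⟩

lemma of_arc (hx : x ≠ v) (hu : u ≠ v) (hxu : A x u ∨ A u x) : AvoidReach A v x u := by
  by_cases h : x = u
  · subst h
    exact refl hx
  · exact ⟨hx, hu, SimpleGraph.Adj.reachable (G := (UG A).induce _) ⟨h, hxu⟩⟩

end AvoidReach

/-- The last vertex before `v` on a directed walk from `x` to `v`. -/
lemma exists_arc_avoidReach {x v : V} (h : Relation.ReflTransGen A x v) (hx : x ≠ v) :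
    ∃ u, A u v ∧ AvoidReach A v x u := by
  induction h using Relation.ReflTransGen.head_induction_on with
  | refl => exact absurd rfl hx
  | @head b c hbc _ ih =>
    by_cases hc : c = v
    · subst hc
      exact ⟨b, hbc, .refl hx⟩
    · obtain ⟨u, huv, hcu⟩ := ih hc
      exact ⟨u, huv, (AvoidReach.of_arc hx hc (Or.inl hbc)).trans hcu⟩

section Counting

variable [Finite V] {X Y : Set V} {v : V}

lemma deg_le_of_arc_avoidReach (hbip : IsBipartition A X Y) (hv : v ∈ X) {p u : V}
    (hpu : AvoidReach A v p u) (huv : A u v) :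
    deg A u ≤ 2 * ({w | AvoidReach A v p w} ∩ X).ncard + 2 := by
  have huY : u ∈ Y := hbip.mem_right_of_arc hv (Or.inl huv)
  have hnbrs : ∀ z, A u z ∨ A z u → z ∈ insert v ({w | AvoidReach A v p w} ∩ X) := by
    intro z huz
    have hzX : z ∈ X := hbip.symm.mem_right_of_arc huY huz.symm
    by_cases hzv : z = v
    · exact .inl hzv
    · exact .inr ⟨hpu.trans (.of_arc hpu.2.1 hzv huz), hzX⟩
  have := deg_le_of_forall_arc_mem hnbrs
  have := Set.ncard_insert_le v ({w | AvoidReach A v p w} ∩ X)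
  omega

lemma deg_add_deg_le (hbip : IsBipartition A X Y) (hv : v ∈ X) {p q u₁ u₂ : V}
    (hpq : ¬ AvoidReach A v p q) (h₁ : AvoidReach A v p u₁) (h₂ : AvoidReach A v q u₂)
    (hu₁ : A u₁ v) (hu₂ : A u₂ v) :
    deg A u₁ + deg A u₂ ≤ 2 * X.ncard + 2 := by
  have := deg_le_of_arc_avoidReach hbip hv h₁ hu₁
  have := deg_le_of_arc_avoidReach hbip hv h₂ hu₂
  set C₁ := {w | AvoidReach A v p w} ∩ X
  set C₂ := {w | AvoidReach A v q w} ∩ X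
  have hdisj : Disjoint C₁ C₂ :=
    Set.disjoint_left.2 fun _ hw₁ hw₂ =>
      hpq (hw₁.1.trans hw₂.1.symm)
  have hsub : C₁ ∪ C₂ ⊆ X \ {v} := by
    rintro w (⟨⟨-, hw, -⟩, hwX⟩ | ⟨⟨-, hw, -⟩, hwX⟩) <;> exact ⟨hwX, hw⟩
  have hle := Set.ncard_le_ncard hsub
  rw [Set.ncard_union_eq hdisj] at hle
  have := Set.ncard_sdiff_singleton_add_one hv X.toFinite
  omega

end Counting

/-- If `D` is a strongly connected balanced bipartite digraph with parts of size `a ≥ 2`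
and `d(x) + d(y) ≥ 2a + 3` for every dominating pair `{x, y}`, then `UG(D)` is
2-connected. -/
theorem stmt0 [Fintype V] (A : V → V → Prop) (X Y : Set V) (a : ℕ) (ha : 2 ≤ a)
    (hX : X.ncard = a) (hY : Y.ncard = a) (hbip : IsBipartition A X Y)
    (hstrong : StrongConn A)
    (hdeg : ∀ x y : V, DomPair A x y → 2 * a + 3 ≤ deg A x + deg A y) :
    TwoConnected (UG A) := by
  have hcard := hbip.card_eq
  refine ⟨by omega, fun v => ?_⟩
  have : Nontrivial V := Fintype.one_lt_card_iff_nontrivial.mp (by omega)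
  obtain ⟨w, hw⟩ := exists_ne v
  refine (SimpleGraph.connected_iff _).2 ⟨?_, ⟨⟨w, hw⟩⟩⟩
  rintro ⟨p, hp⟩ ⟨q, hq⟩
  by_contra hpq
  replace hpq : ¬ AvoidReach A v p q := fun ⟨_, _, h⟩ => hpq h
  obtain ⟨u₁, hu₁, h₁⟩ := exists_arc_avoidReach (hstrong p v) hp
  obtain ⟨u₂, hu₂, h₂⟩ := exists_arc_avoidReach (hstrong q v) hq
  have hne : u₁ ≠ u₂ := by
    rintro rfl
    exact hpq (h₁.trans h₂.symm)
  have hdom := hdeg u₁ u₂ ⟨hne, v, hu₁, hu₂⟩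
  rcases hbip.mem_or_mem v with hv | hv
  · have := deg_add_deg_le hbip hv hpq h₁ h₂ hu₁ hu₂
    omega
  · have := deg_add_deg_le hbip.symm hv hpq h₁ h₂ hu₁ hu₂
    omega
end

section
/- Let D be a strongly connected balanced bipartite digraph of order 2a ≥ 8. Suppose max{d(x), d(y)} ≥ 2a − 1 for every pair of distinct vertices x, y with a common out-neighbour. If D is not isomorphic to the exceptional digraph D(8), then D is hamiltonian. -/
open Finset

variable {V : Type*}

/-- The digraph `A` has a hamiltonian (directed) cycle. -/
def Hamiltonian [Fintype V] (A : V → V → Prop) : Prop :=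
  ∃ f : ZMod (Fintype.card V) → V, Function.Bijective f ∧ ∀ i, A (f i) (f (i + 1))

/-- The arcs of the exceptional digraph `D(8)`; vertices `0,1,2,3` are `x₀,…,x₃` and
`4,5,6,7` are `y₀,…,y₃`. -/
def D8Arcs : List (Fin 8 × Fin 8) :=
  [(4,1), (5,0), (2,7), (3,6),
   (0,4), (4,0), (1,5), (5,1), (2,6), (6,2), (3,7), (7,3),
   (4,2), (2,4), (4,3), (3,4), (5,2), (2,5), (5,3), (3,5)]

/-- The exceptional digraph `D(8)`. -/
def D8 (u v : Fin 8) : Prop := (u, v) ∈ D8Arcs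

/-!
By Hall's theorem the digraph has a cycle factor, i.e. a permutation `f` with an arc `v → f v`
for every `v`: a set of vertices of one part containing a big vertex (one of total degree at least
`2a - 1`) has almost the whole other part as out-neighbours, and the small vertices have pairwise
disjoint out-neighbourhoods by the degree condition on dominating pairs. Take a cycle factor with
as few cycles as possible. If it is a single cycle, the digraph is hamiltonian. Otherwise no two
cycles can be merged by exchanging the successors of two vertices, and since a big vertex misses
at most one arc, this forces all big vertices of `X` onto one cycle and all big vertices of `Y`
onto another one (strong connectivity rules out a common cycle). At most two vertices of each part
are small, so `a = 4`, the factor consists of two `4`-cycles, the big vertices dominate the whole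
other part and every small vertex dominates only its successor: this digraph is `D(8)`.
-/

open scoped Classical
open Equiv

namespace Equiv.Perm

variable [Fintype V] {f : Perm V} {u v : V}

theorem sameCycle_mul_swap_of_sameCycle_right (huv : ¬ f.SameCycle u v) {z : V}
    (hz : f.SameCycle v z) : (f * swap u v).SameCycle u z := by
  set g := f * swap u v
  have hgu : g u = f v := by simp [g]
  have key : ∀ n : ℕ, g.SameCycle u ((f ^ n) (f v)) := by
    intro n
    induction n with
    | zero => simpa [hgu] using (sameCycle_apply_right (f := g)).2 (SameCycle.refl g u)
    | succ n ih =>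
      set t := (f ^ n) (f v)
      have hft : (f ^ (n + 1)) (f v) = f t := by rw [pow_succ', mul_apply]
      by_cases htv : t = v
      · rw [hft, htv, ← hgu]
        exact sameCycle_apply_right.2 (SameCycle.refl g u)
      · have hvt : f.SameCycle v t :=
          sameCycle_pow_right.2 (sameCycle_apply_right.2 (SameCycle.refl f v))
        have htu : t ≠ u := fun h => huv (h ▸ hvt).symm
        have hgt : g t = f t := by simp [g, swap_apply_of_ne_of_ne htu htv]
        rw [hft, ← hgt]
        exact sameCycle_apply_right.2 ih
  obtain ⟨n, rfl⟩ := (sameCycle_apply_left.2 hz).exists_nat_pow_eq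
  exact key n

theorem SameCycle.mul_swap (huv : ¬ f.SameCycle u v) {x y : V} (hxy : f.SameCycle x y) :
    (f * swap u v).SameCycle x y := by
  have huv' : (f * swap u v).SameCycle u v :=
    sameCycle_mul_swap_of_sameCycle_right huv (SameCycle.refl f v)
  have hu : ∀ z, f.SameCycle u z → (f * swap u v).SameCycle u z := fun z hz =>
    huv'.trans (swap_comm u v ▸ sameCycle_mul_swap_of_sameCycle_right (fun h => huv h.symm) hz)
  by_cases hxu : f.SameCycle u x
  · exact (hu x hxu).symm.trans (hu y (hxu.trans hxy))
  by_cases hxv : f.SameCycle v x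
  · exact (sameCycle_mul_swap_of_sameCycle_right huv hxv).symm.trans
      (sameCycle_mul_swap_of_sameCycle_right huv (hxv.trans hxy))
  have hpow : ∀ n : ℕ, ((f * swap u v) ^ n) x = (f ^ n) x := by
    intro n
    induction n with
    | zero => rfl
    | succ n ih =>
      have hu : (f ^ n) x ≠ u := fun h => hxu (h ▸ sameCycle_pow_right.2 (SameCycle.refl f x)).symm
      have hv : (f ^ n) x ≠ v := fun h => hxv (h ▸ sameCycle_pow_right.2 (SameCycle.refl f x)).symm
      rw [pow_succ', mul_apply, ih, pow_succ', mul_apply (f := f), mul_apply,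
        swap_apply_of_ne_of_ne hu hv]
  obtain ⟨n, rfl⟩ := hxy.exists_nat_pow_eq
  exact ⟨n, by rw [zpow_natCast, hpow]⟩

theorem pow_apply_eq_pow_apply_iff {c : V} (hc : f c ≠ c) {m n : ℕ} :
    (f ^ m) c = (f ^ n) c ↔ m ≡ n [MOD #{w | f.SameCycle c w}] := by
  have hs : (f.cycleOf c).support = ({w | f.SameCycle c w} : Finset V) := by
    ext w
    simp [mem_support_cycleOf_iff' hc]
  rw [← hs]
  exact (isCycleOn_support_cycleOf f c).pow_apply_eq_pow_apply (by simpa [hs] using .refl f c)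

end Equiv.Perm

section Digraph

open Equiv.Perm

variable {A : V → V → Prop}

theorem exists_adj_mem_notMem_of_reflTransGen {S : Set V} {u v : V}
    (h : Relation.ReflTransGen A u v) (hu : u ∈ S) (hv : v ∉ S) : ∃ p ∈ S, ∃ q ∉ S, A p q := by
  induction h with
  | refl => exact absurd hu hv
  | @tail w x _ hwx ih => exact if hw : w ∈ S then ⟨w, hw, x, hv, hwx⟩ else ih hw

variable [Fintype V]

noncomputable def outNbrs (A : V → V → Prop) (v : V) : Finset V := {w | A v w}

noncomputable def inNbrs (A : V → V → Prop) (v : V) : Finset V := {w | A w v}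

@[simp] theorem mem_outNbrs {v w : V} : w ∈ outNbrs A v ↔ A v w := by simp [outNbrs]

@[simp] theorem mem_inNbrs {v w : V} : w ∈ inNbrs A v ↔ A w v := by simp [inNbrs]

theorem deg_eq_card_add_card (A : V → V → Prop) (v : V) :
    deg A v = #(outNbrs A v) + #(inNbrs A v) := by
  simp only [deg, outNbrs, inNbrs, ← Set.ncard_coe_finset, coe_filter, mem_univ, true_and]

theorem exists_perm_forall_adj_of_hall
    (hall : ∀ s : Finset V, #s ≤ #(s.biUnion (outNbrs A))) : ∃ f : Perm V, ∀ v, A v (f v) := by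
  obtain ⟨f, hinj, hf⟩ := (all_card_le_biUnion_card_iff_exists_injective _).1 hall
  exact ⟨Equiv.ofBijective f (Finite.injective_iff_bijective.1 hinj), fun v => mem_outNbrs.1 (hf v)⟩

/-- Exchanging the successors of two vertices on different cycles of a cycle factor merges their
cycles, so a cycle factor with the fewest pairs of vertices on different cycles admits no such
exchange. -/
theorem exists_perm_forall_adj_forall_not_swap (h : ∃ f : Perm V, ∀ v, A v (f v)) :
    ∃ f : Perm V, (∀ v, A v (f v)) ∧ ∀ u v, ¬ f.SameCycle u v → ¬ (A u (f v) ∧ A v (f u)) := by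
  obtain ⟨f₀, hf₀⟩ := h
  obtain ⟨f, hf, hmin⟩ := exists_min_image {f : Perm V | ∀ v, A v (f v)}
    (fun f => #{p : V × V | ¬ f.SameCycle p.1 p.2}) ⟨f₀, by simpa using hf₀⟩
  simp only [mem_filter, mem_univ, true_and] at hf hmin
  refine ⟨f, hf, fun u v huv ⟨hu, hv⟩ => ?_⟩
  have hg : ∀ z, A z ((f * swap u v) z) := by
    intro z
    rw [mul_apply, swap_apply_def]
    split_ifs with h₁ h₂
    · exact h₁ ▸ hu
    · exact h₂ ▸ hv
    · exact hf z
  have hlt : #{p : V × V | ¬ (f * swap u v).SameCycle p.1 p.2}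
      < #{p : V × V | ¬ f.SameCycle p.1 p.2} := by
    refine card_lt_card ((ssubset_iff_of_subset ?_).2 ⟨(u, v), ?_⟩)
    · intro p
      simpa using mt (SameCycle.mul_swap huv)
    · simpa using ⟨huv, sameCycle_mul_swap_of_sameCycle_right huv (SameCycle.refl f v)⟩
  exact (hmin _ hg).not_gt hlt

theorem hamiltonian_of_forall_sameCycle [Nonempty V] {f : Perm V} (hA : ∀ v, A v (f v))
    (hf : ∀ x y, f.SameCycle x y) : Hamiltonian A := by
  set n := Fintype.card V
  have : NeZero n := ⟨Fintype.card_ne_zero⟩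
  obtain ⟨v₀⟩ := ‹Nonempty V›
  have hcyc : f.IsCycleOn ((univ : Finset V) : Set V) :=
    ⟨coe_univ (α := V) ▸ Set.bijOn_univ.2 f.bijective, fun x _ y _ => hf x y⟩
  have hpow {i j : ℕ} : (f ^ i) v₀ = (f ^ j) v₀ ↔ i ≡ j [MOD n] :=
    hcyc.pow_apply_eq_pow_apply (mem_univ v₀)
  refine ⟨fun i => (f ^ i.val) v₀, ?_, fun i => ?_⟩
  · refine (Fintype.bijective_iff_injective_and_card _).2 ⟨fun i j hij => ?_, ZMod.card n⟩
    exact ZMod.val_injective n (Nat.ModEq.eq_of_lt_of_lt (hpow.1 hij) i.val_lt j.val_lt)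
  · have : (f ^ (i + 1).val) v₀ = f ((f ^ i.val) v₀) := by
      rw [← mul_apply, ← pow_succ', hpow, ← ZMod.natCast_eq_natCast_iff]
      simp
    simp only [this, hA]

end Digraph

/-- Coordinates on `D(8)`: `(b, k)` is the `k`-th vertex of the cycle `x₂ y₃ x₃ y₂` (`b = false`)
or `y₀ x₁ y₁ x₀` (`b = true`) of its cycle factor. -/
def d8Coord : Fin 8 → Bool × Fin 4 :=
  ![(true, 3), (true, 1), (false, 0), (false, 2), (true, 0), (true, 2), (false, 3), (false, 1)]

theorem d8Coord_bijective : Function.Bijective d8Coord := by decide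

/-- `D(8)` in these coordinates: `(b, k)` lies in `X` iff `b = false ↔ Even k`; the vertices at
even positions dominate the whole other part, the others only their successor. -/
def d8Model (p q : Bool × Fin 4) : Prop :=
  if Even p.2.val then ((p.1 = false ↔ Even p.2.val) ↔ ¬ (q.1 = false ↔ Even q.2.val))
  else q = (p.1, p.2 + 1)

theorem D8_iff_d8Model (i j : Fin 8) : D8 i j ↔ d8Model (d8Coord i) (d8Coord j) := by
  revert i j
  unfold D8 d8Model
  decide

/-- In a balanced bipartite digraph of order `2a`, a big vertex misses at most one of the `2a`
possible arcs between it and the other part. -/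
def IsBig (A : V → V → Prop) (a : ℕ) (v : V) : Prop := 2 * a - 1 ≤ deg A v

/-- The hypotheses of the theorem, with the parts as finsets and strong connectivity stated as
"every nonempty proper vertex set has an arc leaving it". -/
structure BalancedDomDigraph [Fintype V] (A : V → V → Prop) (X Y : Finset V) (a : ℕ) : Prop where
  four_le : 4 ≤ a
  card_X : #X = a
  card_Y : #Y = a
  disjoint : Disjoint X Y
  mem_or_mem : ∀ v, v ∈ X ∨ v ∈ Y
  adj_mem : ∀ u v, A u v → (u ∈ X ∧ v ∈ Y) ∨ (u ∈ Y ∧ v ∈ X)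
  isBig_or_isBig : ∀ u v w, u ≠ v → A u w → A v w → IsBig A a u ∨ IsBig A a v
  exists_adj_compl : ∀ S : Finset V, S.Nonempty → S ≠ univ → ∃ u ∈ S, ∃ v ∉ S, A u v

namespace BalancedDomDigraph

variable [Fintype V] {A : V → V → Prop} {X Y : Finset V} {a : ℕ}
  (H : BalancedDomDigraph A X Y a) {b u v w y₁ y₂ : V}
include H

theorem symm : BalancedDomDigraph A Y X a where
  four_le := H.four_le
  card_X := H.card_Y
  card_Y := H.card_X
  disjoint := H.disjoint.symm
  mem_or_mem v := (H.mem_or_mem v).symm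
  adj_mem u v h := (H.adj_mem u v h).symm
  isBig_or_isBig := H.isBig_or_isBig
  exists_adj_compl := H.exists_adj_compl

theorem notMem_Y (hu : u ∈ X) : u ∉ Y := disjoint_left.1 H.disjoint hu

theorem mem_Y_iff : v ∈ Y ↔ v ∉ X :=
  ⟨fun hv hu => H.notMem_Y hu hv, (H.mem_or_mem v).resolve_left⟩

theorem mem_Y_of_adj (hu : u ∈ X) (h : A u v) : v ∈ Y := by
  rcases H.adj_mem u v h with ⟨-, hv⟩ | ⟨hu', -⟩
  · exact hv
  · exact absurd hu' (H.notMem_Y hu)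

theorem mem_Y_of_adj' (hv : v ∈ X) (h : A u v) : u ∈ Y := by
  rcases H.adj_mem u v h with ⟨-, hv'⟩ | ⟨hu, -⟩
  · exact absurd hv' (H.notMem_Y hv)
  · exact hu

theorem card_univ : Fintype.card V = 2 * a := by
  have hXY : X ∪ Y = univ := eq_univ_of_forall fun v => mem_union.2 (H.mem_or_mem v)
  rw [← Finset.card_univ, ← hXY, card_union_of_disjoint H.disjoint, H.card_X, H.card_Y, two_mul]

theorem card_sdiff_add_card_sdiff_le_one (hb : IsBig A a u) (hu : u ∈ X) :
    #(Y \ outNbrs A u) + #(Y \ inNbrs A u) ≤ 1 := by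
  have hout : outNbrs A u ⊆ Y := fun v hv => H.mem_Y_of_adj hu (mem_outNbrs.1 hv)
  have hin : inNbrs A u ⊆ Y := fun v hv => H.mem_Y_of_adj' hu (mem_inNbrs.1 hv)
  have := H.four_le
  have : 2 * a - 1 ≤ #(outNbrs A u) + #(inNbrs A u) := deg_eq_card_add_card A u ▸ hb
  rw [card_sdiff_of_subset hout, card_sdiff_of_subset hin, H.card_Y]
  have := card_le_card hout
  have := card_le_card hin
  rw [H.card_Y] at *
  omega

theorem eq_of_not_adj_of_not_adj (hb : IsBig A a u) (hu : u ∈ X) (hy₁ : y₁ ∈ Y) (hy₂ : y₂ ∈ Y)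
    (h₁ : ¬ A u y₁) (h₂ : ¬ A u y₂) : y₁ = y₂ := by
  have := H.card_sdiff_add_card_sdiff_le_one hb hu
  exact (card_le_one (s := Y \ outNbrs A u)).1 (by omega) _ (mem_sdiff.2 ⟨hy₁, by simpa⟩) _
    (mem_sdiff.2 ⟨hy₂, by simpa⟩)

theorem eq_of_not_adj_of_not_adj' (hb : IsBig A a u) (hu : u ∈ X) (hy₁ : y₁ ∈ Y) (hy₂ : y₂ ∈ Y)
    (h₁ : ¬ A y₁ u) (h₂ : ¬ A y₂ u) : y₁ = y₂ := by
  have := H.card_sdiff_add_card_sdiff_le_one hb hu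
  exact (card_le_one (s := Y \ inNbrs A u)).1 (by omega) _ (mem_sdiff.2 ⟨hy₁, by simpa⟩) _
    (mem_sdiff.2 ⟨hy₂, by simpa⟩)

theorem adj_of_not_adj (hb : IsBig A a u) (hu : u ∈ X) (hy₁ : y₁ ∈ Y) (h₁ : ¬ A u y₁)
    (hy₂ : y₂ ∈ Y) : A y₂ u := by
  by_contra h₂
  have h := H.card_sdiff_add_card_sdiff_le_one hb hu
  have : 0 < #(Y \ outNbrs A u) := card_pos.2 ⟨y₁, mem_sdiff.2 ⟨hy₁, by simpa⟩⟩
  have : 0 < #(Y \ inNbrs A u) := card_pos.2 ⟨y₂, mem_sdiff.2 ⟨hy₂, by simpa⟩⟩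
  omega

theorem le_card_inNbrs (hb : IsBig A a u) (hu : u ∈ X) : a - 1 ≤ #(inNbrs A u) := by
  have := H.card_sdiff_add_card_sdiff_le_one hb hu
  have := le_card_sdiff (inNbrs A u) Y
  rw [H.card_Y] at this
  omega

theorem le_card_outNbrs (hb : IsBig A a u) (hu : u ∈ X) : a - 1 ≤ #(outNbrs A u) := by
  have := H.card_sdiff_add_card_sdiff_le_one hb hu
  have := le_card_sdiff (outNbrs A u) Y
  rw [H.card_Y] at this
  omega

theorem eq_of_adj_of_adj (hu : ¬ IsBig A a u) (hv : ¬ IsBig A a v) (huw : A u w) (hvw : A v w) :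
    u = v := by
  by_contra hne
  exact (H.isBig_or_isBig u v w hne huw hvw).elim hu hv

theorem exists_adj_left (v : V) : ∃ u, A u v := by
  have hcard := H.card_univ
  have := H.four_le
  obtain ⟨u, -, w, hw, huw⟩ := H.exists_adj_compl (univ.erase v)
    (by rw [← card_pos, card_erase_of_mem (mem_univ v), Finset.card_univ]; omega)
    (by simp [erase_eq_self])
  obtain rfl : w = v := by simpa using hw
  exact ⟨u, huw⟩

theorem exists_adj_right (v : V) : ∃ w, A v w := by
  have hcard := H.card_univ
  have := H.four_le
  obtain ⟨u, hu, w, -, huw⟩ := H.exists_adj_compl {v} (singleton_nonempty v)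
    (fun h => by have := congrArg card h; rw [card_singleton, Finset.card_univ] at this; omega)
  obtain rfl : u = v := by simpa using hu
  exact ⟨w, huw⟩

theorem card_le_card_biUnion_outNbrs {s : Finset V} (hs : s ⊆ X) :
    #s ≤ #(s.biUnion (outNbrs A)) := by
  by_cases hbig : ∃ u ∈ s, IsBig A a u
  · obtain ⟨u, hus, hu⟩ := hbig
    have hle : a - 1 ≤ #(s.biUnion (outNbrs A)) :=
      (H.le_card_outNbrs hu (hs hus)).trans (card_le_card (subset_biUnion_of_mem _ hus))
    rcases (card_le_card hs).lt_or_eq with hlt | heq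
    · rw [H.card_X] at hlt
      omega
    · obtain rfl : s = X := eq_of_subset_of_card_le hs heq.ge
      have hY : Y ⊆ s.biUnion (outNbrs A) := fun y hy => by
        obtain ⟨x, hx⟩ := H.exists_adj_left y
        exact mem_biUnion.2 ⟨x, H.symm.mem_Y_of_adj' hy hx, mem_outNbrs.2 hx⟩
      rw [H.card_X, ← H.card_Y]
      exact card_le_card hY
  · simp only [not_exists, not_and] at hbig
    rw [card_biUnion fun u hu v hv hne => disjoint_left.2 fun w hwu hwv =>
      hne (H.eq_of_adj_of_adj (hbig u hu) (hbig v hv) (mem_outNbrs.1 hwu) (mem_outNbrs.1 hwv))]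
    exact card_eq_sum_ones s ▸ sum_le_sum fun u _ =>
      card_pos.2 ((H.exists_adj_right u).imp fun _ => mem_outNbrs.2)

theorem exists_perm_forall_adj : ∃ f : Perm V, ∀ v, A v (f v) := by
  refine exists_perm_forall_adj_of_hall fun s => ?_
  have hY : {v ∈ s | v ∉ X} ⊆ Y := fun v hv =>
    (H.mem_or_mem v).resolve_left (mem_filter.1 hv).2
  have hdisj : Disjoint ({v ∈ s | v ∈ X}.biUnion (outNbrs A))
      ({v ∈ s | v ∉ X}.biUnion (outNbrs A)) := by
    refine disjoint_left.2 fun w h₁ h₂ => ?_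
    obtain ⟨u, hu, huw⟩ := mem_biUnion.1 h₁
    obtain ⟨v, hv, hvw⟩ := mem_biUnion.1 h₂
    exact H.notMem_Y (H.symm.mem_Y_of_adj (hY hv) (mem_outNbrs.1 hvw))
      (H.mem_Y_of_adj (mem_filter.1 hu).2 (mem_outNbrs.1 huw))
  calc #s = #{v ∈ s | v ∈ X} + #{v ∈ s | v ∉ X} := (card_filter_add_card_filter_not _).symm
    _ ≤ #({v ∈ s | v ∈ X}.biUnion (outNbrs A)) + #({v ∈ s | v ∉ X}.biUnion (outNbrs A)) :=
      add_le_add (H.card_le_card_biUnion_outNbrs fun v hv => (mem_filter.1 hv).2)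
        (H.symm.card_le_card_biUnion_outNbrs hY)
    _ = #(s.biUnion (outNbrs A)) := by
      rw [← card_union_of_disjoint hdisj]
      congr 1
      ext w
      simp only [mem_union, mem_biUnion, mem_filter]
      grind

theorem exists_isBig_mem_of_isBig (hb : IsBig A a b) (hbX : b ∈ X) : ∃ y ∈ Y, IsBig A a y := by
  have := H.le_card_inNbrs hb hbX
  have := H.four_le
  obtain ⟨y₁, hy₁, y₂, hy₂, hne⟩ := one_lt_card.1 (show 1 < #(inNbrs A b) by omega)
  rw [mem_inNbrs] at hy₁ hy₂
  by_contra! h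
  exact hne (H.eq_of_adj_of_adj (h y₁ (H.mem_Y_of_adj' hbX hy₁))
    (h y₂ (H.mem_Y_of_adj' hbX hy₂)) hy₁ hy₂)

/-- A big vertex of `X` is dominated by all of `Y` but one vertex, and by at most one small
vertex. -/
theorem sub_two_le_card_filter_isBig (hb : IsBig A a b) (hbX : b ∈ X) :
    a - 2 ≤ #{y ∈ Y | IsBig A a y} := by
  have hsub : {y ∈ Y | ¬ IsBig A a y} ⊆ (Y \ inNbrs A b) ∪ {y ∈ inNbrs A b | ¬ IsBig A a y} :=
    fun y hy => by
      simp only [mem_filter, mem_union, mem_sdiff] at hy ⊢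
      tauto
  have hsmall : #{y ∈ inNbrs A b | ¬ IsBig A a y} ≤ 1 := card_le_one.2 fun y₁ hy₁ y₂ hy₂ => by
    simp only [mem_filter, mem_inNbrs] at hy₁ hy₂
    exact H.eq_of_adj_of_adj hy₁.2 hy₂.2 hy₁.1 hy₂.1
  have := (card_le_card hsub).trans (card_union_le _ _)
  have := H.card_sdiff_add_card_sdiff_le_one hb hbX
  have := card_filter_add_card_filter_not (s := Y) (fun y => IsBig A a y)
  rw [H.card_Y] at this
  omega

end BalancedDomDigraph

theorem BalancedDomDigraph.of_ncard [Fintype V] {A : V → V → Prop} {X Y : Set V} {a : ℕ}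
    (ha : 4 ≤ a) (hX : X.ncard = a) (hY : Y.ncard = a) (hbip : IsBipartition A X Y)
    (hstrong : StrongConn A)
    (hdeg : ∀ x y : V, DomPair A x y → 2 * a - 1 ≤ max (deg A x) (deg A y)) :
    BalancedDomDigraph A X.toFinset Y.toFinset a where
  four_le := ha
  card_X := by rw [← Set.ncard_eq_toFinset_card', hX]
  card_Y := by rw [← Set.ncard_eq_toFinset_card', hY]
  disjoint := Set.disjoint_toFinset.2 hbip.1
  mem_or_mem v := by simpa using (Set.ext_iff.1 hbip.2.1 v).2 trivial
  adj_mem u v h := by simpa using hbip.2.2 u v h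
  isBig_or_isBig u v w hne hu hv := le_max_iff.1 (hdeg u v ⟨hne, w, hu, hv⟩)
  exists_adj_compl S := fun ⟨u, hu⟩ hS => by
    obtain ⟨v, hv⟩ := not_forall.1 fun h => hS (eq_univ_of_forall h)
    exact exists_adj_mem_notMem_of_reflTransGen (S := ↑S) (hstrong u v) hu hv

/-- A cycle factor `f` of the digraph none of whose pairs of cycles can be merged into one cycle
by exchanging two successors. -/
structure BlockedFactor [Fintype V] (A : V → V → Prop) (X Y : Finset V) (a : ℕ) (f : Perm V) : Prop
    extends BalancedDomDigraph A X Y a where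
  adj_apply : ∀ v, A v (f v)
  not_adj_and_adj : ∀ u v, ¬ f.SameCycle u v → ¬ (A u (f v) ∧ A v (f u))

namespace BlockedFactor

open Equiv.Perm

variable [Fintype V] {A : V → V → Prop} {X Y : Finset V} {a : ℕ} {f : Perm V}
  (B : BlockedFactor A X Y a f) {c d e s t u v w x z : V}
include B

theorem symm : BlockedFactor A Y X a f :=
  { B.toBalancedDomDigraph.symm with
    adj_apply := B.adj_apply
    not_adj_and_adj := B.not_adj_and_adj }

theorem apply_mem (hv : v ∈ X) : f v ∈ Y := B.mem_Y_of_adj hv (B.adj_apply v)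

theorem inv_apply_mem (hv : v ∈ X) : f⁻¹ v ∈ Y :=
  B.mem_Y_of_adj' hv (by simpa using B.adj_apply (f⁻¹ v))

theorem not_adj_apply (huv : ¬ f.SameCycle u v) (h : A u (f v)) : ¬ A v (f u) :=
  fun h' => B.not_adj_and_adj u v huv ⟨h, h'⟩

theorem not_adj_inv_apply (hu' : ∀ y ∈ Y, A y u) (hz : z ∈ X)
    (huz : ¬ f.SameCycle u z) : ¬ A (f⁻¹ u) z := fun h =>
  B.not_adj_and_adj (f⁻¹ u) (f⁻¹ z) (by simpa using huz)
    ⟨by simpa using h, by simpa using hu' _ (B.inv_apply_mem hz)⟩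

theorem sameCycle_of_forall_adj (hu : u ∈ X) (hw : w ∈ X) (hu' : ∀ y ∈ Y, A y u)
    (hw' : ∀ y ∈ Y, A y w) : f.SameCycle u w :=
  by_contra fun h => B.not_adj_inv_apply hu' hw h (hw' _ (B.inv_apply_mem hu))

theorem not_isBig_of_forall_adj (hu : u ∈ X) (hw : w ∈ X) (huw : u ≠ w) (hu' : ∀ y ∈ Y, A y u)
    (hw' : ∀ y ∈ Y, A y w) (hz : z ∈ X) (huz : ¬ f.SameCycle u z) : ¬ IsBig A a z := fun hb =>
  huw <| f⁻¹.injective <| B.eq_of_not_adj_of_not_adj' hb hz (B.inv_apply_mem hu)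
    (B.inv_apply_mem hw) (B.not_adj_inv_apply hu' hz huz)
    (B.not_adj_inv_apply hw' hz fun h => huz ((B.sameCycle_of_forall_adj hu hw hu' hw').trans h))

theorem forall_adj_or_forall_adj (hx : x ∈ X) (hz : z ∈ X) (hbx : IsBig A a x)
    (hbz : IsBig A a z) (hxz : ¬ f.SameCycle x z) : (∀ y ∈ Y, A y x) ∨ (∀ y ∈ Y, A y z) := by
  by_cases h : A x (f z)
  · exact .inr fun y => B.adj_of_not_adj hbz hz (B.apply_mem hx) (B.not_adj_apply hxz h)
  · exact .inl fun y => B.adj_of_not_adj hbx hx (B.apply_mem hz) h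

theorem eq_or_eq_of_isBig (hu : u ∈ X) (hw : w ∈ X) (hbu : IsBig A a u) (hbw : IsBig A a w)
    (huw : ¬ f.SameCycle u w) (hmiss : ¬ A u (f w)) (hz : z ∈ X) (hbz : IsBig A a z) :
    z = u ∨ z = w := by
  have hu' : ∀ y ∈ Y, A y u := fun y => B.adj_of_not_adj hbu hu (B.apply_mem hw) hmiss
  by_cases huz : f.SameCycle u z
  · refine .inl (by_contra fun hzu => ?_)
    rcases B.forall_adj_or_forall_adj hz hw hbz hbw fun h => huw (huz.trans h) with hz' | hw'
    · exact B.not_isBig_of_forall_adj hu hz (Ne.symm hzu) hu' hz' hw huw hbw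
    · exact huw (B.sameCycle_of_forall_adj hu hw hu' hw')
  · refine .inr (f.injective ?_)
    by_cases h : A u (f z)
    · exact absurd (B.sameCycle_of_forall_adj hu hz hu' fun y =>
        B.adj_of_not_adj hbz hz (B.apply_mem hu) (B.not_adj_apply huz h)) huz
    · exact B.eq_of_not_adj_of_not_adj hbu hu (B.apply_mem hz) (B.apply_mem hw) h hmiss

theorem exists_forall_adj (hu : u ∈ X) (hw : w ∈ X) (hbu : IsBig A a u)
    (huw : ¬ f.SameCycle u w) (hmiss : ¬ A u (f w)) : ∃ t, ∀ x ∈ X, x ≠ u → A x t := by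
  have hu' : ∀ y ∈ Y, A y u := fun y => B.adj_of_not_adj hbu hu (B.apply_mem hw) hmiss
  by_cases hbp : IsBig A a (f⁻¹ u)
  · exact ⟨f⁻¹ u, fun x hx _ => B.symm.adj_of_not_adj hbp (B.inv_apply_mem hu) hw
      (B.not_adj_inv_apply hu' hw huw) hx⟩
  have hbfw : IsBig A a (f w) := by
    refine by_contra fun hs => huw ?_
    have h := B.eq_of_adj_of_adj hs hbp (hu' _ (B.apply_mem hw)) (hu' _ (B.inv_apply_mem hu))
    simpa [h] using (sameCycle_apply_right.2 (SameCycle.refl f w)).symm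
  exact ⟨f w, fun x hx hxu => by_contra fun h =>
    hxu (B.symm.eq_of_not_adj_of_not_adj' hbfw (B.apply_mem hw) hx hu h hmiss)⟩

theorem sameCycle_of_isBig (hu : u ∈ X) (hw : w ∈ X) (hbu : IsBig A a u) (hbw : IsBig A a w) :
    f.SameCycle u w := by
  by_contra huw
  wlog hmiss : ¬ A u (f w) generalizing u w
  · exact this hw hu hbw hbu (fun h => huw h.symm) (B.not_adj_apply huw (not_not.1 hmiss))
  obtain ⟨t, ht⟩ := B.exists_forall_adj hu hw hbu huw hmiss
  have hsmall : ∀ x ∈ (X.erase u).erase w, ¬ IsBig A a x := fun x hx hbx => by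
    rcases B.eq_or_eq_of_isBig hu hw hbu hbw huw hmiss (mem_of_mem_erase (mem_of_mem_erase hx))
      hbx with rfl | rfl <;> simp at hx
  have hcard : 1 < #((X.erase u).erase w) := by
    have := pred_card_le_card_erase (s := X.erase u) (a := w)
    have := pred_card_le_card_erase (s := X) (a := u)
    have := B.four_le
    rw [B.card_X] at *
    omega
  obtain ⟨x₁, hx₁, x₂, hx₂, hne⟩ := one_lt_card.1 hcard
  have hx (x) (hx : x ∈ (X.erase u).erase w) : A x t :=
    ht x (mem_of_mem_erase (mem_of_mem_erase hx)) (ne_of_mem_erase (mem_of_mem_erase hx))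
  exact hne (B.eq_of_adj_of_adj (hsmall x₁ hx₁) (hsmall x₂ hx₂) (hx x₁ hx₁) (hx x₂ hx₂))

theorem exists_adj_not_sameCycle (hst : ¬ f.SameCycle s t) :
    ∃ z e, f.SameCycle s z ∧ ¬ f.SameCycle z e ∧ A z e := by
  obtain ⟨z, hz, e, he, hze⟩ := B.exists_adj_compl {v | f.SameCycle s v}
    ⟨s, by simp [SameCycle.refl]⟩ fun h => hst (by simpa using eq_univ_iff_forall.1 h t)
  simp only [mem_filter, mem_univ, true_and] at hz he
  exact ⟨z, e, hz, fun h => he (hz.trans h), hze⟩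

theorem isBig_or_isBig_inv_apply (hze : ¬ f.SameCycle z e) (h : A z e) :
    IsBig A a z ∨ IsBig A a (f⁻¹ e) := by
  refine B.isBig_or_isBig z (f⁻¹ e) e (fun hz => hze ?_) h (by simpa using B.adj_apply (f⁻¹ e))
  simpa [hz] using sameCycle_apply_right.2 (SameCycle.refl f (f⁻¹ e))

theorem forall_adj_inv_apply (hv : v ∈ X) (hv' : ∀ y ∈ Y, A y v) (hc : c ∈ Y)
    (hcs : ¬ IsBig A a c) (hcv : ¬ f.SameCycle c v) : ∀ x ∈ X, A x (f⁻¹ v) := by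
  have hpv : A (f⁻¹ v) v := by simpa using B.adj_apply (f⁻¹ v)
  have hcp : ¬ f.SameCycle c (f⁻¹ v) := by simpa using hcv
  have hbp : IsBig A a (f⁻¹ v) := (B.isBig_or_isBig c (f⁻¹ v) v
    (fun h => hcp (h ▸ SameCycle.refl f c)) (hv' c hc) hpv).resolve_left hcs
  exact fun x => B.symm.adj_of_not_adj hbp (B.inv_apply_mem hv) (B.symm.apply_mem hc)
    (B.not_adj_apply hcp (by simpa using hv' c hc))

theorem eq_or_eq_apply_of_not_sameCycle (hall : ∀ v, IsBig A a v → f.SameCycle u v)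
    (hw' : ∀ y ∈ Y, A y w) (hz : z ∈ X) (huz : ¬ f.SameCycle u z) (huv : ¬ f.SameCycle u v) :
    v = z ∨ v = f z := by
  have hY : ∀ y ∈ Y, ¬ f.SameCycle u y → y = f z := fun y hy huy =>
    B.eq_of_adj_of_adj (mt (hall y) huy) (mt (hall (f z)) (by simpa using huz))
      (hw' y hy) (hw' _ (B.apply_mem hz))
  rcases B.mem_or_mem v with hv | hv
  · exact .inl (f.injective (hY _ (B.apply_mem hv) (by simpa using huv)))
  · exact .inr (hY v hv huv)

theorem forall_adj_of_sameCycle (hall : ∀ v, IsBig A a v → f.SameCycle u v) (hz : z ∈ X)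
    (huz : ¬ f.SameCycle u z) (hw : w ∈ X) (hw' : ∀ y ∈ Y, A y w) (huw : f.SameCycle u w)
    (huv : f.SameCycle u v) : (v ∈ X → ∀ y ∈ Y, A y v) ∧ (v ∈ Y → ∀ x ∈ X, A x v) := by
  have hzs : ¬ IsBig A a z := mt (hall z) huz
  have hfzs : ¬ IsBig A a (f z) := mt (hall (f z)) (by simpa using huz)
  have step (t) (hut : f.SameCycle u t) (ht : (t ∈ X → ∀ y ∈ Y, A y t) ∧ (t ∈ Y → ∀ x ∈ X, A x t)) :
      (f⁻¹ t ∈ X → ∀ y ∈ Y, A y (f⁻¹ t)) ∧ (f⁻¹ t ∈ Y → ∀ x ∈ X, A x (f⁻¹ t)) := by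
    refine ⟨fun hpt => ?_, fun hpt => ?_⟩
    · have htY : t ∈ Y := by simpa using B.apply_mem hpt
      exact B.symm.forall_adj_inv_apply htY (ht.2 htY) hz hzs fun h => huz (hut.trans h.symm)
    · have htX : t ∈ X := by simpa using B.symm.apply_mem hpt
      exact B.forall_adj_inv_apply htX (ht.1 htX) (B.apply_mem hz) hfzs
        fun h => huz (hut.trans (by simpa using h.symm))
  have hpow (n : ℕ) : f.SameCycle u ((f⁻¹ ^ n) w) ∧
      (((f⁻¹ ^ n) w ∈ X → ∀ y ∈ Y, A y ((f⁻¹ ^ n) w)) ∧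
        ((f⁻¹ ^ n) w ∈ Y → ∀ x ∈ X, A x ((f⁻¹ ^ n) w))) := by
    induction n with
    | zero => exact ⟨huw, fun _ => hw', fun h => absurd h (B.notMem_Y hw)⟩
    | succ n ih =>
      rw [pow_succ', mul_apply]
      exact ⟨by simpa using ih.1, step _ ih.1 ih.2⟩
  obtain ⟨n, rfl⟩ := (sameCycle_inv.2 (huw.symm.trans huv)).exists_nat_pow_eq
  exact (hpow n).2

/-- The arc `z → e` leaving the cycle of `z` makes `f⁻¹ e` big; then the cycle of `z` is `z, f z`,
every vertex on the cycle of `u` is dominated by the whole other part, and exchanges with `z`,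
`f z` show that no arc leaves the cycle of `u`. -/
theorem false_of_forall_isBig_sameCycle (hall : ∀ v, IsBig A a v → f.SameCycle u v)
    (hz : z ∈ X) (huz : ¬ f.SameCycle u z) (hze : ¬ f.SameCycle z e) (hA : A z e) : False := by
  have hw : f⁻¹ e ∈ X := B.symm.inv_apply_mem (B.mem_Y_of_adj hz hA)
  have hbw : IsBig A a (f⁻¹ e) :=
    (B.isBig_or_isBig_inv_apply hze hA).resolve_left (mt (hall z) huz)
  have hw' : ∀ y ∈ Y, A y (f⁻¹ e) := fun y => B.adj_of_not_adj hbw hw (B.apply_mem hz)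
    (B.not_adj_apply (fun h => huz ((hall _ hbw).trans h.symm)) (by simpa using hA))
  have hfull {v} (huv : f.SameCycle u v) :=
    B.forall_adj_of_sameCycle hall hz huz hw hw' (hall _ hbw) huv
  have hcyc {v} (huv : ¬ f.SameCycle u v) := B.eq_or_eq_apply_of_not_sameCycle hall hw' hz huz huv
  have hffz : f (f z) = z := by
    refine (hcyc (by simpa using huz)).resolve_right fun h => ?_
    exact B.notMem_Y hz (f.injective h ▸ B.apply_mem hz)
  obtain ⟨p, hp, q, hq, hpq⟩ := B.exists_adj_compl {v | f.SameCycle u v}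
    ⟨u, by simp [SameCycle.refl]⟩ fun h => huz (by simpa using eq_univ_iff_forall.1 h z)
  simp only [mem_filter, mem_univ, true_and] at hp hq
  have hpz : ¬ f.SameCycle p z := fun h => huz (hp.trans h)
  rcases hcyc hq with rfl | rfl
  · have hpY : p ∈ Y := B.mem_Y_of_adj' hz hpq
    have := (hfull (by simpa using hp)).1 (B.symm.apply_mem hpY) _ (B.apply_mem hz)
    exact B.not_adj_apply (fun h => hpz (by simpa using h.symm)) this (by rwa [hffz])
  · have hpX : p ∈ X := B.symm.mem_Y_of_adj' (B.apply_mem hz) hpq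
    exact B.not_adj_apply (fun h => hpz h.symm)
      ((hfull (by simpa using hp)).2 (B.apply_mem hpX) _ hz) hpq

theorem exists_isBig_not_sameCycle (hst : ¬ f.SameCycle s t) (u : V) :
    ∃ v, IsBig A a v ∧ ¬ f.SameCycle u v := by
  by_contra hall
  simp only [not_exists, not_and, not_not] at hall
  obtain ⟨s₀, hs₀⟩ : ∃ s₀, ¬ f.SameCycle u s₀ :=
    not_forall.1 fun h => hst ((h s).symm.trans (h t))
  obtain ⟨z, e, hs₀z, hze, hA⟩ := B.exists_adj_not_sameCycle (t := u) (fun h => hs₀ h.symm)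
  have huz : ¬ f.SameCycle u z := fun h => hs₀ (h.trans hs₀z.symm)
  rcases B.mem_or_mem z with hz | hz
  · exact B.false_of_forall_isBig_sameCycle hall hz huz hze hA
  · exact B.symm.false_of_forall_isBig_sameCycle hall hz huz hze hA

theorem exists_isBig_mem (hst : ¬ f.SameCycle s t) : ∃ x ∈ X, IsBig A a x := by
  obtain ⟨z, e, -, hze, hA⟩ := B.exists_adj_not_sameCycle hst
  obtain ⟨b, hb⟩ : ∃ b, IsBig A a b := (B.isBig_or_isBig_inv_apply hze hA).elim (⟨_, ·⟩) (⟨_, ·⟩)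
  rcases B.mem_or_mem b with hbX | hbY
  · exact ⟨b, hbX, hb⟩
  · exact B.symm.exists_isBig_mem_of_isBig hb hbY

theorem card_filter_sameCycle_eq (v : V) :
    #{x ∈ X | f.SameCycle v x} = #{y ∈ Y | f.SameCycle v y} :=
  card_nbij' (f ·) (f⁻¹ ·)
    (fun x hx => by simpa using ⟨B.apply_mem (mem_filter.1 hx).1, (mem_filter.1 hx).2⟩)
    (fun y hy => by simpa using ⟨B.symm.inv_apply_mem (mem_filter.1 hy).1, (mem_filter.1 hy).2⟩)
    (fun x _ => by simp) (fun y _ => by simp)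

theorem card_sameCycle_eq (v : V) : #{w | f.SameCycle v w} = 2 * #{x ∈ X | f.SameCycle v x} := by
  rw [two_mul]
  nth_rw 2 [B.card_filter_sameCycle_eq]
  rw [← card_union_of_disjoint (disjoint_filter_filter B.disjoint)]
  congr 1
  ext w
  simp only [mem_filter, mem_univ, true_and, mem_union]
  have := B.mem_or_mem w
  tauto

/-- All big vertices of `X` lie on the cycle of `c` and all big vertices of `Y` on that of `d`;
as at most two vertices of each part are small, both cycles meet `X` in at least `a - 2`
vertices. -/
theorem card_filter_sameCycle_eq_two (hc : c ∈ X) (hbc : IsBig A a c) (hd : d ∈ Y)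
    (hbd : IsBig A a d) (hcd : ¬ f.SameCycle c d) :
    a = 4 ∧ #{x ∈ X | f.SameCycle c x} = 2 ∧ {x ∈ X | IsBig A a x} = {x ∈ X | f.SameCycle c x} ∧
      {x ∈ X | f.SameCycle c x} ∪ {x ∈ X | f.SameCycle d x} = X := by
  have hsub : {x ∈ X | IsBig A a x} ⊆ {x ∈ X | f.SameCycle c x} := fun x hx => by
    simp only [mem_filter] at hx ⊢
    exact ⟨hx.1, B.sameCycle_of_isBig hc hx.1 hbc hx.2⟩
  have hsubd : {y ∈ Y | IsBig A a y} ⊆ {y ∈ Y | f.SameCycle d y} := fun y hy => by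
    simp only [mem_filter] at hy ⊢
    exact ⟨hy.1, B.symm.sameCycle_of_isBig hd hy.1 hbd hy.2⟩
  have hXc := (B.symm.sub_two_le_card_filter_isBig hbd hd).trans (card_le_card hsub)
  have hXd : a - 2 ≤ #{x ∈ X | f.SameCycle d x} := B.card_filter_sameCycle_eq d ▸
    (B.sub_two_le_card_filter_isBig hbc hc).trans (card_le_card hsubd)
  have hdisj : Disjoint {x ∈ X | f.SameCycle c x} {x ∈ X | f.SameCycle d x} :=
    disjoint_filter.2 fun x _ hcx hdx => hcd (hcx.trans hdx.symm)
  have hunion := card_le_card (union_subset (filter_subset (f.SameCycle c) X)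
    (filter_subset (f.SameCycle d) X))
  rw [card_union_of_disjoint hdisj, B.card_X] at hunion
  have := B.four_le
  have := B.symm.sub_two_le_card_filter_isBig hbd hd
  refine ⟨by omega, by omega, eq_of_subset_of_card_le hsub (by omega), eq_of_subset_of_card_le
    (union_subset (filter_subset _ X) (filter_subset _ X)) ?_⟩
  rw [card_union_of_disjoint hdisj, B.card_X]
  omega

theorem apply_mem_iff : f v ∈ X ↔ v ∉ X :=
  ⟨fun h hv => B.notMem_Y h (B.apply_mem hv),
    fun hv => B.symm.apply_mem ((B.mem_or_mem v).resolve_left hv)⟩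

theorem pow_apply_mem_iff (n : ℕ) : (f ^ n) v ∈ X ↔ (v ∈ X ↔ Even n) := by
  induction n with
  | zero => simp
  | succ n ih =>
    rw [pow_succ', mul_apply, B.apply_mem_iff, ih, Nat.even_add_one]
    tauto

theorem apply_ne (v : V) : f v ≠ v := fun h => by simpa [h] using B.apply_mem_iff (v := v)

theorem adj_iff_of_mem (hcd : ¬ f.SameCycle c d) (hcyc : ∀ v, f.SameCycle c v ∨ f.SameCycle d v)
    (hX : ∀ x ∈ X, IsBig A a x ↔ f.SameCycle c x) (hY : ∀ y ∈ Y, IsBig A a y ↔ f.SameCycle d y)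
    (hc : 1 < #{x ∈ X | f.SameCycle c x}) (hu : u ∈ X) :
    A u v ↔ if IsBig A a u then v ∈ Y else v = f u := by
  have hout (x) (hx : x ∈ X) (hbx : IsBig A a x) (y) (hy : y ∈ Y) : A x y := by
    refine by_contra fun h => ?_
    rw [B.card_filter_sameCycle_eq] at hc
    obtain ⟨y₁, hy₁, y₂, hy₂, hne⟩ := one_lt_card.1 hc
    simp only [mem_filter] at hy₁ hy₂
    have hs {y} (hy : y ∈ Y) (hcy : f.SameCycle c y) : ¬ IsBig A a y :=
      fun hb => hcd (hcy.trans ((hY y hy).1 hb).symm)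
    exact hne (B.eq_of_adj_of_adj (hs hy₁.1 hy₁.2) (hs hy₂.1 hy₂.2)
      (B.adj_of_not_adj hbx hx hy h hy₁.1) (B.adj_of_not_adj hbx hx hy h hy₂.1))
  split_ifs with hbu
  · exact ⟨B.mem_Y_of_adj hu, hout u hu hbu v⟩
  refine ⟨fun h => ?_, fun h => h ▸ B.adj_apply u⟩
  have hp : f⁻¹ v ∈ X := B.symm.inv_apply_mem (B.mem_Y_of_adj hu h)
  have hdu : f.SameCycle d u := (hcyc u).resolve_left ((hX u hu).not.1 hbu)
  rcases hcyc (f⁻¹ v) with hcp | hdp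
  · refine absurd (by simpa using h) (B.not_adj_apply (fun h' => hcd ?_)
      (hout _ hp ((hX _ hp).2 hcp) _ (B.apply_mem hu)))
    exact hcp.trans (h'.trans hdu.symm)
  · have := B.eq_of_adj_of_adj hbu (fun hb => hcd ((hX _ hp).1 hb |>.trans hdp.symm)) h
      (by simpa using B.adj_apply (f⁻¹ v))
    simp [this]

theorem exists_equiv_D8_of_adj_iff (hc : c ∈ X) (hd : d ∈ Y) (hcd : ¬ f.SameCycle c d)
    (hc4 : #{w | f.SameCycle c w} = 4) (hd4 : #{w | f.SameCycle d w} = 4)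
    (hV : Fintype.card V = 8)
    (hA : ∀ u v, A u v ↔ if (f.SameCycle c u ↔ u ∈ X) then (u ∈ X ↔ v ∉ X) else v = f u) :
    ∃ e : V ≃ Fin 8, ∀ u v, A u v ↔ D8 (e u) (e v) := by
  set base : Bool → V := fun b => if b then d else c
  set φ : Bool × Fin 4 → V := fun p => (f ^ p.2.val) (base p.1)
  have hsc (p : Bool × Fin 4) : f.SameCycle c (φ p) ↔ p.1 = false := by
    rcases p with ⟨_ | _, k⟩ <;> simp [φ, base, hcd, SameCycle.refl]
  have hmem (p : Bool × Fin 4) : φ p ∈ X ↔ (p.1 = false ↔ Even p.2.val) := by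
    rw [B.pow_apply_mem_iff]
    have hdX : d ∉ X := fun h => B.notMem_Y h hd
    rcases p with ⟨_ | _, k⟩ <;> simp [base, hc, hdX]
  have hpow (b : Bool) {m n : ℕ} : (f ^ m) (base b) = (f ^ n) (base b) ↔ m ≡ n [MOD 4] := by
    rw [pow_apply_eq_pow_apply_iff (B.apply_ne _)]
    cases b <;> simp [base, hc4, hd4]
  have hinj : Function.Injective φ := by
    rintro ⟨b, k⟩ ⟨b', k'⟩ h
    obtain rfl : b = b' := by
      have := hsc (b, k)
      rw [h, hsc] at this
      simpa using this.symm
    exact Prod.ext rfl (Fin.ext (Nat.ModEq.eq_of_lt_of_lt ((hpow b).1 h) k.isLt k'.isLt))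
  have hsucc (p : Bool × Fin 4) : f (φ p) = φ (p.1, p.2 + 1) := by
    simp only [φ]
    rw [← mul_apply, ← pow_succ', hpow, Fin.val_add]
    exact (Nat.mod_modEq _ _).symm
  have hmodel (p q : Bool × Fin 4) : A (φ p) (φ q) ↔ d8Model p q := by
    simp only [hA, hsc, hmem, hsucc, hinj.eq_iff, d8Model]
    by_cases hk : Even p.2.val <;> by_cases hb : p.1 = false <;> simp [hk, hb]
  have hbij : Function.Bijective (φ ∘ d8Coord) :=
    ((Fintype.bijective_iff_injective_and_card φ).2 ⟨hinj, by simp [hV]⟩).comp d8Coord_bijective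
  set g := Equiv.ofBijective _ hbij
  refine ⟨g.symm, fun u v => ?_⟩
  obtain ⟨i, rfl⟩ := g.surjective u
  obtain ⟨j, rfl⟩ := g.surjective v
  rw [g.symm_apply_apply, g.symm_apply_apply, D8_iff_d8Model, ← hmodel]
  rfl

theorem exists_equiv_D8 (hst : ¬ f.SameCycle s t) :
    ∃ e : V ≃ Fin 8, ∀ u v, A u v ↔ D8 (e u) (e v) := by
  obtain ⟨c, hc, hbc⟩ := B.exists_isBig_mem hst
  obtain ⟨d, hd, hbd⟩ := B.exists_isBig_mem_of_isBig hbc hc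
  have hcd : ¬ f.SameCycle c d := fun hcd => by
    obtain ⟨v, hbv, hcv⟩ := B.exists_isBig_not_sameCycle hst c
    rcases B.mem_or_mem v with hv | hv
    · exact hcv (B.sameCycle_of_isBig hc hv hbc hbv)
    · exact hcv (hcd.trans (B.symm.sameCycle_of_isBig hd hv hbd hbv))
  obtain ⟨ha, hc2, hXc, hXcd⟩ := B.card_filter_sameCycle_eq_two hc hbc hd hbd hcd
  obtain ⟨-, hd2, hYd, hYdc⟩ :=
    B.symm.card_filter_sameCycle_eq_two hd hbd hc hbc fun h => hcd h.symm
  have hcyc (v : V) : f.SameCycle c v ∨ f.SameCycle d v := by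
    rcases B.mem_or_mem v with hv | hv
    · rw [← hXcd] at hv
      simp only [mem_union, mem_filter] at hv
      tauto
    · rw [← hYdc] at hv
      simp only [mem_union, mem_filter] at hv
      tauto
  have hX (x) (hx : x ∈ X) : IsBig A a x ↔ f.SameCycle c x := by
    simpa [hx] using Finset.ext_iff.1 hXc x
  have hY (y) (hy : y ∈ Y) : IsBig A a y ↔ f.SameCycle d y := by
    simpa [hy] using Finset.ext_iff.1 hYd y
  have hdc (v) : f.SameCycle d v ↔ ¬ f.SameCycle c v :=
    ⟨fun h h' => hcd (h'.trans h.symm), (hcyc v).resolve_left⟩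
  refine B.exists_equiv_D8_of_adj_iff hc hd hcd (by rw [B.card_sameCycle_eq, hc2])
    (by rw [B.symm.card_sameCycle_eq, hd2]) (by rw [B.card_univ, ha]) fun u v => ?_
  rcases B.mem_or_mem u with hu | hu
  · rw [B.adj_iff_of_mem hcd hcyc hX hY (by omega) hu, hX u hu]
    simp [hu, B.mem_Y_iff]
  · rw [B.symm.adj_iff_of_mem (fun h => hcd h.symm) (fun v => (hcyc v).symm) hY hX (by omega) hu,
      hY u hu, hdc]
    have huX : u ∉ X := fun h => B.notMem_Y h hu
    simp [huX]

end BlockedFactor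

/-- Theorem 1.9: a strongly connected balanced bipartite digraph of order `2a ≥ 8` in
which `max {d(x), d(y)} ≥ 2a − 1` for every pair of distinct vertices with a common
out-neighbour is hamiltonian, unless it is isomorphic to `D(8)`. -/
theorem stmt5 [Fintype V] (A : V → V → Prop) (X Y : Set V) (a : ℕ) (ha : 4 ≤ a)
    (hX : X.ncard = a) (hY : Y.ncard = a) (hbip : IsBipartition A X Y)
    (hstrong : StrongConn A)
    (hdeg : ∀ x y : V, DomPair A x y → 2 * a - 1 ≤ max (deg A x) (deg A y))
    (hnotD8 : ¬ ∃ e : V ≃ Fin 8, ∀ u v, A u v ↔ D8 (e u) (e v)) :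
    Hamiltonian A := by
  have H := BalancedDomDigraph.of_ncard ha hX hY hbip hstrong hdeg
  obtain ⟨f, hf, hblk⟩ := exists_perm_forall_adj_forall_not_swap H.exists_perm_forall_adj
  by_cases hone : ∀ x y, f.SameCycle x y
  · have : Nonempty V := Fintype.card_pos_iff.1 (by rw [H.card_univ]; omega)
    exact hamiltonian_of_forall_sameCycle hf hone
  · obtain ⟨s, t, hst⟩ : ∃ s t, ¬ f.SameCycle s t := by simpa using hone
    exact (hnotD8 ((BlockedFactor.mk H hf hblk).exists_equiv_D8 hst)).elim
end

section
/- The digraph D(8) is strongly connected, balanced bipartite of order 8, satisfies max{d(x), d(y)} ≥ 7 for every dominating pair of vertices {x, y}, but is not hamiltonian. -/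
open Finset

variable {V : Type*}

/-!
`D(8)` is strongly connected because it has the closed spanning walk
`x₀ y₀ x₁ y₁ x₂ y₂ x₂ y₃ x₃ y₁`. The only vertices of degree `3` are `x₀, x₁, y₂, y₃`, and
their unique out-neighbours `y₀, y₁, x₂, x₃` are distinct, so every dominating pair contains a
vertex of degree `7`. A hamiltonian cycle would have to use the forced arcs `y₂x₂` and `y₃x₃`;
then it can leave `{x₀, x₁, y₀, y₁}` only through an arc into `x₂` or `x₃`, which is impossible.
-/

theorem ZMod.eq_univ_of_add_one_mem {n : ℕ} [NeZero n] {T : Set (ZMod n)} {i : ZMod n}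
    (hi : i ∈ T) (hT : ∀ j ∈ T, j + 1 ∈ T) : T = Set.univ := by
  have hadd : ∀ k : ℕ, i + k ∈ T := by
    intro k
    induction k with
    | zero => simpa using hi
    | succ k ih => simpa [add_assoc] using hT _ ih
  refine Set.eq_univ_of_forall fun j => ?_
  simpa using hadd (j - i).val

section Digraph

variable {A : V → V → Prop}

theorem strongConn_of_closedWalk {n : ℕ} [NeZero n] (w : ZMod n → V)
    (hw : Function.Surjective w) (harc : ∀ i, A (w i) (w (i + 1))) : StrongConn A := by
  intro u v
  obtain ⟨i, rfl⟩ := hw u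
  obtain ⟨j, rfl⟩ := hw v
  have hreach : {j | Relation.ReflTransGen A (w i) (w j)} = Set.univ :=
    ZMod.eq_univ_of_add_one_mem Relation.ReflTransGen.refl fun j hj => hj.tail (harc j)
  exact Set.eq_univ_iff_forall.1 hreach j

theorem deg_eq_card_filter [Fintype V] [DecidableRel A] (x : V) :
    deg A x = #{y | A x y} + #{y | A y x} := by
  simp only [deg, Set.ncard_eq_toFinset_card', Set.toFinset_ofPred]

/-- The cycle cannot leave `S`: its arc into the only out-neighbour of `w ∉ S` must start at `w`. -/
theorem not_hamiltonian_of_exits_forced [Fintype V] (S : Set V) (hS : S.Nonempty)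
    (hS_ne : S ≠ Set.univ)
    (hexit : ∀ u ∈ S, ∀ v, A u v → v ∈ S ∨ ∃ w ∉ S, ∀ v', A w v' → v' = v) :
    ¬ Hamiltonian A := by
  rintro ⟨f, hf, harc⟩
  obtain ⟨v₀, hv₀⟩ := hS
  have : Nonempty V := ⟨v₀⟩
  obtain ⟨i, rfl⟩ := hf.2 v₀
  have hclosed : ∀ j ∈ f ⁻¹' S, j + 1 ∈ f ⁻¹' S := by
    intro j hj
    rcases hexit _ hj _ (harc j) with hmem | ⟨w, hw, hforced⟩
    · exact hmem
    · obtain ⟨k, rfl⟩ := hf.2 w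
      have hkj : k = j := add_right_cancel (hf.1 (hforced _ (harc k)))
      exact absurd (hkj ▸ hj) hw
  have huniv := ZMod.eq_univ_of_add_one_mem (T := f ⁻¹' S) hv₀ hclosed
  exact hS_ne (Set.eq_univ_of_forall fun v => by
    obtain ⟨j, rfl⟩ := hf.2 v
    exact Set.eq_univ_iff_forall.1 huniv j)

end Digraph

instance : DecidableRel D8 := fun u v => inferInstanceAs (Decidable ((u, v) ∈ D8Arcs))

theorem D8_strongConn : StrongConn D8 :=
  strongConn_of_closedWalk (n := 10) (show ZMod 10 → Fin 8 from ![0, 4, 1, 5, 2, 6, 2, 7, 3, 5])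
    (by decide) (by decide)

theorem D8_isBipartition :
    IsBipartition D8 {u : Fin 8 | (u : ℕ) < 4} {u : Fin 8 | 4 ≤ (u : ℕ)} := by
  refine ⟨Set.disjoint_left.2 fun u hu hu' => ?_, Set.eq_univ_of_forall fun u => ?_, by decide⟩
  · simp only [Set.mem_ofPred_eq] at hu hu'
    omega
  · simp only [Set.mem_union, Set.mem_ofPred_eq]
    omega

theorem D8_max_deg_of_domPair (x y : Fin 8) (hxy : DomPair D8 x y) :
    7 ≤ max (deg D8 x) (deg D8 y) := by
  simp only [deg_eq_card_filter]
  revert x y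
  unfold DomPair
  decide

theorem D8_not_hamiltonian : ¬ Hamiltonian D8 :=
  not_hamiltonian_of_exits_forced (({0, 1, 4, 5} : Finset (Fin 8)) : Set (Fin 8))
    ⟨0, by decide⟩ ((Set.ne_univ_iff_exists_notMem _).2 ⟨2, by decide⟩)
    (by simp only [Finset.mem_coe]; decide)

/-- The digraph `D(8)` is strongly connected, balanced bipartite of order `8`, satisfies
`max {d(x), d(y)} ≥ 7` for every dominating pair, but is not hamiltonian. -/
theorem stmt8 :
    StrongConn D8 ∧
    IsBipartition D8 {u : Fin 8 | (u : ℕ) < 4} {u : Fin 8 | 4 ≤ (u : ℕ)} ∧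
    Set.ncard {u : Fin 8 | (u : ℕ) < 4} = 4 ∧
    Set.ncard {u : Fin 8 | 4 ≤ (u : ℕ)} = 4 ∧
    (∀ x y : Fin 8, DomPair D8 x y → 7 ≤ max (deg D8 x) (deg D8 y)) ∧
    ¬ Hamiltonian D8 := by
  refine ⟨D8_strongConn, D8_isBipartition, ?_, ?_, D8_max_deg_of_domPair, D8_not_hamiltonian⟩
  all_goals rw [Set.ncard_eq_toFinset_card']; decide
end

section
/- For every a ≥ 4 there exists a strongly connected balanced bipartite digraph D of order 2a satisfying max{d(x), d(y)} ≥ 2a − 3 for every dominating pair of vertices {x, y}, such that D contains no perfect matching from X to Y. (Hence condition B_0 in the perfect-matching lemma cannot be weakened to B_{−1}.) -/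
open Finset

variable {V : Type*}

/-- A perfect matching from `X` to `Y`: pairwise vertex-disjoint arcs, one leaving
each vertex of `X`, all ending in `Y`. -/
def PerfectMatchingFromTo (A : V → V → Prop) (X Y : Set V) : Prop :=
  ∃ f : V → V, Set.InjOn f X ∧ ∀ x ∈ X, A x (f x) ∧ f x ∈ Y
/-!
Take `X = A ∪ B ∪ {z}` and `Y = C ∪ {u, v}` with `X` and `C` joined completely in both
directions. All arcs leaving `A ∪ B` end in `C`, and `|C| = |A ∪ B| - 1`, so Hall's condition
fails and there is no perfect matching from `X` to `Y`. Every vertex of `X ∪ C` has degree at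
least `2a - 3`, and `u`, `v` have disjoint out-neighbourhoods `A` and `B ∪ {z}`, so every
dominating pair contains a vertex of large degree.
-/

open Relation

theorem StrongConn.of_hub {A : V → V → Prop} (c : V) (hto : ∀ v, ReflTransGen A v c)
    (hfrom : ∀ v, ReflTransGen A c v) : StrongConn A :=
  fun u v => (hto u).trans (hfrom v)

theorem ncard_add_ncard_le_deg [Finite V] {A : V → V → Prop} {x : V} {S T : Set V}
    (hS : ∀ y ∈ S, A x y) (hT : ∀ y ∈ T, A y x) : S.ncard + T.ncard ≤ deg A x :=
  add_le_add (Set.ncard_le_ncard hS) (Set.ncard_le_ncard hT)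

theorem not_perfectMatchingFromTo_of_ncard_lt {A : V → V → Prop} {X Y S T : Set V}
    (hSX : S ⊆ X) (hST : ∀ x ∈ S, ∀ y ∈ Y, A x y → y ∈ T) (hT : T.Finite)
    (hcard : T.ncard < S.ncard) : ¬ PerfectMatchingFromTo A X Y := by
  rintro ⟨f, hinj, hf⟩
  have hmaps : ∀ x ∈ S, f x ∈ T := fun x hx => hST x hx _ (hf x (hSX hx)).2 (hf x (hSX hx)).1
  exact hcard.not_ge (Set.ncard_le_ncard_of_injOn f hmaps (hinj.mono hSX) hT)

theorem Fin.ncard_preimage_val {n : ℕ} {s : Set ℕ} (hs : s ⊆ Set.Iio n) :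
    (Fin.val ⁻¹' s : Set (Fin n)).ncard = s.ncard :=
  Set.ncard_preimage_of_injective_subset_range Fin.val_injective
    fun k hk => ⟨⟨k, hs hk⟩, rfl⟩

theorem Fin.ncard_preimage_val_Iio {n m : ℕ} (h : m ≤ n) :
    (Fin.val ⁻¹' Set.Iio m : Set (Fin n)).ncard = m := by
  rw [Fin.ncard_preimage_val (Set.Iio_subset_Iio h), Set.ncard_Iio_nat]

theorem Fin.ncard_preimage_val_Ico {n l m : ℕ} (h : m ≤ n) :
    (Fin.val ⁻¹' Set.Ico l m : Set (Fin n)).ncard = m - l := by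
  rw [Fin.ncard_preimage_val (Set.Ico_subset_Iio_self.trans (Set.Iio_subset_Iio h)),
    Set.ncard_Ico_nat]

/-- The vertex `i` stands for `z` if `i = 0`, for the single vertex of `A` if `i = 1`, for a
vertex of `B` if `2 ≤ i < a`, for `u` if `i = a`, for `v` if `i = a + 1`, and for a vertex of
`C` if `a + 2 ≤ i`. -/
def noMatchingDigraph (a : ℕ) (i j : Fin (2 * a)) : Prop :=
  (i.val < a ∧ a + 2 ≤ j.val) ∨ (a + 2 ≤ i.val ∧ j.val < a) ∨
    (i.val = 0 ∧ (j.val = a ∨ j.val = a + 1)) ∨ (i.val = a + 1 ∧ j.val = 0) ∨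
    (i.val = a ∧ j.val = 1) ∨ (i.val = a + 1 ∧ 2 ≤ j.val ∧ j.val < a)

namespace noMatchingDigraph

variable {a : ℕ}

theorem isBipartition (ha : 2 ≤ a) :
    IsBipartition (noMatchingDigraph a) (Fin.val ⁻¹' Set.Iio a)
      (Fin.val ⁻¹' Set.Ico a (2 * a)) := by
  refine ⟨Set.disjoint_left.2 fun i hi hi' => ?_, Set.eq_univ_of_forall fun i => ?_,
    fun i j hij => ?_⟩
  · simp only [Set.mem_preimage, Set.mem_Iio, Set.mem_Ico] at hi hi'
    omega
  · simp only [Set.mem_union, Set.mem_preimage, Set.mem_Iio, Set.mem_Ico]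
    have := i.isLt
    omega
  · simp only [Set.mem_preimage, Set.mem_Iio, Set.mem_Ico]
    grind [noMatchingDigraph]

theorem exists_arc_to_lt (ha : 2 ≤ a) {w : Fin (2 * a)} (hw : a ≤ w.val) :
    ∃ x : Fin (2 * a), x.val < a ∧ noMatchingDigraph a w x := by
  have := w.isLt
  by_cases hu : w.val = a
  · exact ⟨⟨1, by omega⟩, by grind [noMatchingDigraph]⟩
  · exact ⟨⟨0, by omega⟩, by grind [noMatchingDigraph]⟩

theorem exists_arc_from_lt {w : Fin (2 * a)} (hw : a ≤ w.val) :
    ∃ x : Fin (2 * a), x.val < a ∧ noMatchingDigraph a x w := by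
  have := w.isLt
  exact ⟨⟨0, by omega⟩, by grind [noMatchingDigraph]⟩

theorem exists_arc_from_uv (ha : 2 ≤ a) {x : Fin (2 * a)} (hx : x.val < a) :
    ∃ e : Fin (2 * a), e.val ∈ Set.Ico a (a + 2) ∧ noMatchingDigraph a e x := by
  by_cases h1 : x.val = 1
  · exact ⟨⟨a, by omega⟩, by grind [noMatchingDigraph]⟩
  · exact ⟨⟨a + 1, by omega⟩, by grind [noMatchingDigraph]⟩

theorem strongConn (ha : 3 ≤ a) : StrongConn (noMatchingDigraph a) := by
  set c : Fin (2 * a) := ⟨a + 2, by omega⟩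
  have arc_c : ∀ x : Fin (2 * a), x.val < a → noMatchingDigraph a x c := fun x hx =>
    Or.inl ⟨hx, le_rfl⟩
  have c_arc : ∀ x : Fin (2 * a), x.val < a → noMatchingDigraph a c x := fun x hx =>
    Or.inr (Or.inl ⟨le_rfl, hx⟩)
  refine StrongConn.of_hub c (fun w => ?_) (fun w => ?_)
  · rcases lt_or_ge w.val a with hw | hw
    · exact .single (arc_c w hw)
    · obtain ⟨x, hx, hwx⟩ := exists_arc_to_lt (by omega) hw
      exact .head hwx (.single (arc_c x hx))
  · rcases lt_or_ge w.val a with hw | hw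
    · exact .single (c_arc w hw)
    · obtain ⟨x, hx, hxw⟩ := exists_arc_from_lt hw
      exact .head (c_arc x hx) (.single hxw)

theorem not_domPair_of_mem_uv {x y : Fin (2 * a)} (hx : x.val ∈ Set.Ico a (a + 2))
    (hy : y.val ∈ Set.Ico a (a + 2)) : ¬ DomPair (noMatchingDigraph a) x y := by
  rintro ⟨hne, w, hxw, hyw⟩
  have := Fin.val_injective.ne hne
  simp only [Set.mem_Ico] at hx hy
  simp only [noMatchingDigraph] at hxw hyw
  omega

theorem two_mul_sub_three_le_deg_of_val_lt (ha : 2 ≤ a) {w : Fin (2 * a)} (hw : w.val < a) :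
    2 * a - 3 ≤ deg (noMatchingDigraph a) w := by
  set C : Set (Fin (2 * a)) := Fin.val ⁻¹' Set.Ico (a + 2) (2 * a)
  obtain ⟨e, he, hew⟩ := exists_arc_from_uv ha hw
  have heC : e ∉ C := by
    simp only [C, Set.mem_Ico, Set.mem_preimage] at he ⊢
    omega
  have hdeg := ncard_add_ncard_le_deg (A := noMatchingDigraph a) (x := w) (S := C)
    (T := insert e C) (fun y hy => Or.inl ⟨hw, hy.1⟩)
    (Set.forall_mem_insert.2 ⟨hew, fun y hy => Or.inr (Or.inl ⟨hy.1, hw⟩)⟩)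
  rw [Set.ncard_insert_of_notMem heC, Fin.ncard_preimage_val_Ico le_rfl] at hdeg
  omega

theorem two_mul_le_deg_of_le_val {w : Fin (2 * a)} (hw : a + 2 ≤ w.val) :
    2 * a ≤ deg (noMatchingDigraph a) w := by
  set X : Set (Fin (2 * a)) := Fin.val ⁻¹' Set.Iio a
  have hdeg := ncard_add_ncard_le_deg (A := noMatchingDigraph a) (x := w) (S := X) (T := X)
    (fun y hy => Or.inr (Or.inl ⟨hw, hy⟩)) (fun y hy => Or.inl ⟨hy, hw⟩)
  rwa [Fin.ncard_preimage_val_Iio (by omega), ← two_mul] at hdeg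

theorem two_mul_sub_three_le_deg (ha : 2 ≤ a) {w : Fin (2 * a)}
    (hw : w.val ∉ Set.Ico a (a + 2)) : 2 * a - 3 ≤ deg (noMatchingDigraph a) w := by
  rw [Set.mem_Ico, not_and_or, not_le, not_lt] at hw
  rcases hw with hw | hw
  · exact two_mul_sub_three_le_deg_of_val_lt ha hw
  · exact (Nat.sub_le _ _).trans (two_mul_le_deg_of_le_val hw)

theorem not_perfectMatchingFromTo (ha : 2 ≤ a) :
    ¬ PerfectMatchingFromTo (noMatchingDigraph a) (Fin.val ⁻¹' Set.Iio a)
      (Fin.val ⁻¹' Set.Ico a (2 * a)) := by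
  refine not_perfectMatchingFromTo_of_ncard_lt (S := Fin.val ⁻¹' Set.Ico 1 a)
    (T := Fin.val ⁻¹' Set.Ico (a + 2) (2 * a)) (fun x hx => hx.2) (fun x hx y hy hxy => ?_)
    (Set.toFinite _) ?_
  · simp only [Set.mem_preimage, Set.mem_Ico] at hx hy ⊢
    simp only [noMatchingDigraph] at hxy
    omega
  · rw [Fin.ncard_preimage_val_Ico le_rfl, Fin.ncard_preimage_val_Ico (by omega)]
    omega

end noMatchingDigraph

/-- For every `a ≥ 4` there is a strongly connected balanced bipartite digraph of order
`2a` satisfying `max {d(x), d(y)} ≥ 2a − 3` for every dominating pair, which contains no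
perfect matching from `X` to `Y`. -/
theorem stmt11 (a : ℕ) (ha : 4 ≤ a) :
    ∃ (A : Fin (2 * a) → Fin (2 * a) → Prop) (X Y : Set (Fin (2 * a))),
      IsBipartition A X Y ∧ X.ncard = a ∧ Y.ncard = a ∧ StrongConn A ∧
      (∀ x y, DomPair A x y → 2 * a - 3 ≤ max (deg A x) (deg A y)) ∧
      ¬ PerfectMatchingFromTo A X Y := by
  refine ⟨noMatchingDigraph a, Fin.val ⁻¹' Set.Iio a, Fin.val ⁻¹' Set.Ico a (2 * a),
    noMatchingDigraph.isBipartition (by omega), ?_, ?_, noMatchingDigraph.strongConn (by omega),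
    fun x y hxy => ?_, noMatchingDigraph.not_perfectMatchingFromTo (by omega)⟩
  · exact Fin.ncard_preimage_val_Iio (by omega)
  · rw [Fin.ncard_preimage_val_Ico le_rfl]
    omega
  by_cases hx : x.val ∈ Set.Ico a (a + 2)
  · by_cases hy : y.val ∈ Set.Ico a (a + 2)
    · exact absurd hxy (noMatchingDigraph.not_domPair_of_mem_uv hx hy)
    · exact le_max_of_le_right (noMatchingDigraph.two_mul_sub_three_le_deg (by omega) hy)
  · exact le_max_of_le_left (noMatchingDigraph.two_mul_sub_three_le_deg (by omega) hx)
end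

section
/- The digraph H'(6) is strongly connected, satisfies max{d(x), d(y)} ≥ 5 for every dominating pair of vertices {x, y}, but is not hamiltonian. (Hence the bound 2a ≥ 8 in the main hamiltonicity theorem is sharp.) -/
open Finset

variable {V : Type*}

/-- The arcs of the digraph `H'(6)`; vertices `0,1,2` are `x₀,x₁,x₂` and `3,4,5`
are `y₀,y₁,y₂`. -/
def H6'Arcs : List (Fin 6 × Fin 6) :=
  [(3,1), (4,2), (0,5),
   (0,3), (3,0), (1,4), (4,1), (2,5), (5,2),
   (0,4), (4,0), (1,5), (5,1)]

/-- The digraph `H'(6)` of Example 6. -/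
def H6' (u v : Fin 6) : Prop := (u, v) ∈ H6'Arcs

/-! The 2-cycles `y₀x₀, x₀y₁, y₁x₁, x₁y₂, y₂x₂` form a spanning path that can be walked in both
directions, so `H'(6)` is strongly connected. The successor map `σ` of a hamiltonian cycle would be
a permutation along arcs with no 2-cycles. Since `x₀` is the only in-neighbour of `y₀` and `y₂` the
only out-neighbour of `x₂`, it has `σ x₀ = y₀` and `σ x₂ = y₂`, hence `σ y₀ = x₁`; then neither
out-neighbour `x₁, x₂` of `y₂` is left for `σ y₂`. -/

open Relation Order

theorem strongConn_of_surjective_path {α : Type*} [LinearOrder α] [SuccOrder α]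
    [IsSuccArchimedean α] {A : V → V → Prop} (f : α → V) (hf : Function.Surjective f)
    (hpath : ∀ i, i < succ i → A (f i) (f (succ i)) ∧ A (f (succ i)) (f i)) :
    StrongConn A := by
  intro u v
  obtain ⟨a, rfl⟩ := hf u
  obtain ⟨b, rfl⟩ := hf v
  refine ReflTransGen.lift f (fun _ _ h => h) a b (reflTransGen_of_succ _ ?_ ?_)
  · exact fun i hi => (hpath i (lt_succ_of_not_isMax hi.2.not_isMax)).1
  · exact fun i hi => (hpath i (lt_succ_of_not_isMax hi.2.not_isMax)).2

theorem deg_eq_card [Fintype V] (A : V → V → Prop) [DecidableRel A] (x : V) :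
    deg A x = #{y | A x y} + #{y | A y x} := by
  simp only [deg, ← Set.ncard_coe_finset, coe_filter, mem_univ, true_and]

theorem Hamiltonian.exists_perm_adj [Fintype V] {A : V → V → Prop} (hA : Hamiltonian A)
    (hcard : 3 ≤ Fintype.card V) :
    ∃ σ : Equiv.Perm V, (∀ v, A v (σ v)) ∧ ∀ v, σ (σ v) ≠ v := by
  obtain ⟨f, hf, hcyc⟩ := hA
  let e := Equiv.ofBijective f hf
  refine ⟨(e.symm.trans (Equiv.addRight 1)).trans e, fun v => ?_, fun v h => ?_⟩
  · have := hcyc (e.symm v)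
    rwa [show f (e.symm v) = v from e.apply_symm_apply v] at this
  · have h2 : ((2 : ℕ) : ZMod (Fintype.card V)) = 0 := by
      have := congrArg e.symm h
      simp only [Equiv.trans_apply, Equiv.symm_apply_apply, Equiv.coe_addRight, add_assoc] at this
      simpa [one_add_one_eq_two] using this
    have := Nat.le_of_dvd two_pos ((ZMod.natCast_eq_zero_iff _ _).1 h2)
    omega

instance : DecidableRel H6' := fun u v => inferInstanceAs (Decidable ((u, v) ∈ H6'Arcs))

theorem H6'_strongConn : StrongConn H6' :=
  strongConn_of_surjective_path ![3, 0, 4, 1, 5, 2] (by decide) (by decide)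

-- The vertices of degree 4 are `x₂` and `y₀`, which lie in different parts.
theorem H6'_five_le_max_deg_of_domPair (x y : Fin 6) (h : DomPair H6' x y) :
    5 ≤ max (deg H6' x) (deg H6' y) := by
  simp only [deg_eq_card]
  revert x y
  unfold DomPair
  decide

theorem H6'_not_exists_perm_adj :
    ¬ ∃ σ : Equiv.Perm (Fin 6), (∀ v, H6' v (σ v)) ∧ ∀ v, σ (σ v) ≠ v := by
  rintro ⟨σ, hσ, hσσ⟩
  have in3 : ∀ u, H6' u 3 → u = 0 := by decide
  have out3 : ∀ v, H6' 3 v → v = 0 ∨ v = 1 := by decide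
  have out2 : ∀ v, H6' 2 v → v = 5 := by decide
  have out5 : ∀ v, H6' 5 v → v = 1 ∨ v = 2 := by decide
  have hσ0 : σ 0 = 3 := by
    rw [← in3 (σ.symm 3) (by simpa using hσ (σ.symm 3)), Equiv.apply_symm_apply]
  have hσ3 : σ 3 = 1 := (out3 _ (hσ 3)).resolve_left fun h => hσσ 0 (by rw [hσ0, h])
  have hσ2 : σ 2 = 5 := out2 _ (hσ 2)
  rcases out5 _ (hσ 5) with h | h
  · exact absurd (σ.injective (h.trans hσ3.symm)) (by decide)
  · exact hσσ 2 (by rw [hσ2, h])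

/-- The digraph `H'(6)` is strongly connected and satisfies `max {d(x), d(y)} ≥ 5` for
every dominating pair, but is not hamiltonian. -/
theorem stmt13 :
    StrongConn H6' ∧
    (∀ x y : Fin 6, DomPair H6' x y → 5 ≤ max (deg H6' x) (deg H6' y)) ∧
    ¬ Hamiltonian H6' :=
  ⟨H6'_strongConn, H6'_five_le_max_deg_of_domPair,
    fun h => H6'_not_exists_perm_adj (h.exists_perm_adj (by simp))⟩
end
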